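/- For any Hermitian matrix X on the bipartite space ℂ^{d_A}⊗ℂ^{d_B}, the trace norm of the partial transpose satisfies ‖X^{T_B}‖₁ ≤ d_B · ‖X‖₁. -/

import Mathlib

open scoped BigOperators ComplexOrder

noncomputable section

/-- Bipartite matrices on `ℂ^{IA} ⊗ ℂ^{IB}`, indexed by pairs. -/
abbrev BMat (IA IB : Type) : Type := Matrix (IA × IB) (IA × IB) ℂ

/-- Partial transpose on the `B` system: `(X^{T_B})_{(i,j),(k,l)} = X_{(i,l),(k,j)}`. -/
def ptB {IA IB : Type} (X : BMat IA IB) : BMat IA IB :=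
  fun p q => X (p.1, q.2) (q.1, p.2)

/-- Trace norm `‖X‖₁ = tr √(X† X)`. -/
noncomputable def traceNorm {n : Type} [Fintype n] [DecidableEq n]
    (X : Matrix n n ℂ) : ℝ :=
  (((Matrix.isHermitian_conjTranspose_mul_self X).eigenvectorUnitary.1 *
      Matrix.diagonal ((fun r : ℝ => (r : ℂ)) ∘ (Real.sqrt ·) ∘ (Matrix.isHermitian_conjTranspose_mul_self X).eigenvalues) *
      (star (Matrix.isHermitian_conjTranspose_mul_self X).eigenvectorUnitary : Matrix n n ℂ)).trace).re

/-- Operator norm (largest singular value). -/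
noncomputable def opNorm {n : Type} [Fintype n] [DecidableEq n] (X : Matrix n n ℂ) : ℝ :=
  ‖Matrix.toEuclideanCLM (𝕜 := ℂ) X‖

/-- Logarithmic negativity `E_N(X) = log₂ ‖X^{T_B}‖₁`. -/
noncomputable def EN {IA IB : Type} [Fintype IA] [Fintype IB] [DecidableEq IA] [DecidableEq IB]
    (X : BMat IA IB) : ℝ :=
  Real.logb 2 (traceNorm (ptB X))

/-- The extension `id_k ⊗ f` of a map on matrices, acting blockwise. -/
def extMap {I J : Type} (f : Matrix I I ℂ → Matrix J J ℂ) (k : ℕ)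
    (M : Matrix (Fin k × I) (Fin k × I) ℂ) : Matrix (Fin k × J) (Fin k × J) ℂ :=
  fun p q => f (fun i i' => M (p.1, i) (q.1, i')) p.2 q.2

/-- A map on matrices is completely positive if all its extensions `id_k ⊗ f`
map positive semidefinite matrices to positive semidefinite matrices. -/
def CompletelyPositive {I J : Type} [Fintype I] [Fintype J]
    (f : Matrix I I ℂ → Matrix J J ℂ) : Prop :=
  ∀ (k : ℕ) (M : Matrix (Fin k × I) (Fin k × I) ℂ), M.PosSemidef → (extMap f k M).PosSemidef

/-- A PPTq operation: a Hermitian-preserving, trace-preserving linear map `N`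
such that `T_{B'} ∘ N ∘ T_B` is completely positive. -/
def IsPPTq {IA IB JA JB : Type} [Fintype IA] [Fintype IB] [Fintype JA] [Fintype JB]
    (N : BMat IA IB →ₗ[ℂ] BMat JA JB) : Prop :=
  (∀ X : BMat IA IB, X.IsHermitian → (N X).IsHermitian) ∧
  (∀ X : BMat IA IB, (N X).trace = X.trace) ∧
  CompletelyPositive (fun X => ptB (N (ptB X)))

/-- A bipartite quasi-state: Hermitian with trace one. -/
def IsQuasiState {IA IB : Type} [Fintype IA] [Fintype IB] (ρ : BMat IA IB) : Prop :=
  ρ.IsHermitian ∧ ρ.trace = 1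

/-- A bipartite quantum state: positive semidefinite with trace one. -/
def IsState {IA IB : Type} [Fintype IA] [Fintype IB] (ρ : BMat IA IB) : Prop :=
  ρ.PosSemidef ∧ ρ.trace = 1

/-- The maximally entangled state `Φ^d = (1/d) ∑_{i,j} |ii⟩⟨jj|`. -/
noncomputable def MES (d : ℕ) : BMat (Fin d) (Fin d) :=
  fun p q => if p.1 = p.2 ∧ q.1 = q.2 then (1 : ℂ) / d else 0

/-- `n`-fold tensor (Kronecker) power, with all `A` factors grouped against all `B` factors. -/
def tensorPow {IA IB : Type} (ρ : BMat IA IB) (n : ℕ) :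
    BMat (Fin n → IA) (Fin n → IB) :=
  fun p q => ∏ i : Fin n, ρ (p.1 i, p.2 i) (q.1 i, q.2 i)

/-- Tensor (Kronecker) product of two bipartite matrices, grouping `A` systems together
and `B` systems together. -/
def tensorMul {IA IB JA JB : Type} (ρ : BMat IA IB) (σ : BMat JA JB) :
    BMat (IA × JA) (IB × JB) :=
  fun p q => ρ (p.1.1, p.2.1) (q.1.1, q.2.1) * σ (p.1.2, p.2.2) (q.1.2, q.2.2)

/-- One-shot exact distillable entanglement under PPTq operations. -/
noncomputable def oneShotDistill {IA IB : Type} [Fintype IA] [Fintype IB]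
    (ρ : BMat IA IB) : ℝ :=
  sSup { x : ℝ | ∃ d : ℕ, 0 < d ∧ x = Real.logb 2 d ∧
    ∃ Λ : BMat IA IB →ₗ[ℂ] BMat (Fin d) (Fin d), IsPPTq Λ ∧ Λ ρ = MES d }

/-- One-shot exact entanglement cost under PPTq operations. -/
noncomputable def oneShotCost {IA IB : Type} [Fintype IA] [Fintype IB]
    (ρ : BMat IA IB) : ℝ :=
  sInf { x : ℝ | ∃ d : ℕ, 0 < d ∧ x = Real.logb 2 d ∧
    ∃ Λ : BMat (Fin d) (Fin d) →ₗ[ℂ] BMat IA IB, IsPPTq Λ ∧ Λ (MES d) = ρ }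

/-- The one-shot distillation error for `n` copies towards `Φ^d`, optimized over PPTq operations. -/
noncomputable def distillErr {IA IB : Type} [Fintype IA] [Fintype IB]
    [DecidableEq IA] [DecidableEq IB] (ρ : BMat IA IB) (n d : ℕ) : ℝ :=
  sInf { e : ℝ | ∃ Λ : BMat (Fin n → IA) (Fin n → IB) →ₗ[ℂ] BMat (Fin d) (Fin d),
    IsPPTq Λ ∧ e = traceNorm (Λ (tensorPow ρ n) - MES d) }

/-- The one-shot dilution error for preparing `n` copies from `Φ^d`, optimized over PPTq operations. -/
noncomputable def costErr {IA IB : Type} [Fintype IA] [Fintype IB]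
    [DecidableEq IA] [DecidableEq IB] (ρ : BMat IA IB) (n d : ℕ) : ℝ :=
  sInf { e : ℝ | ∃ Λ : BMat (Fin d) (Fin d) →ₗ[ℂ] BMat (Fin n → IA) (Fin n → IB),
    IsPPTq Λ ∧ e = traceNorm (tensorPow ρ n - Λ (MES d)) }

/-- Distillable entanglement under PPTq operations (asymptotically vanishing error). -/
noncomputable def EDppt {IA IB : Type} [Fintype IA] [Fintype IB]
    [DecidableEq IA] [DecidableEq IB] (ρ : BMat IA IB) : ℝ :=
  sSup { r : ℝ | Filter.Tendsto (fun n : ℕ => distillErr ρ n (2 ^ ⌊r * n⌋₊))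
    Filter.atTop (nhds 0) }

/-- Entanglement cost under PPTq operations (asymptotically vanishing error). -/
noncomputable def ECppt {IA IB : Type} [Fintype IA] [Fintype IB]
    [DecidableEq IA] [DecidableEq IB] (ρ : BMat IA IB) : ℝ :=
  sInf { r : ℝ | Filter.Tendsto (fun n : ℕ => costErr ρ n (2 ^ ⌈r * n⌉₊))
    Filter.atTop (nhds 0) }

/-- Tempered negativity `N_τ(σ | ρ)`. -/
noncomputable def temperedNeg {IA IB : Type} [Fintype IA] [Fintype IB]
    [DecidableEq IA] [DecidableEq IB] (σ ρ : BMat IA IB) : ℝ :=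
  sSup { t : ℝ | ∃ X : Matrix (IA × IB) (IA × IB) ℂ, X.IsHermitian ∧
    opNorm (ptB X) ≤ 1 ∧ (X * ρ).trace = (opNorm X : ℂ) ∧ (X * σ).trace = (t : ℂ) }

/-- Asymptotic exact conversion rate under PPTq operations. -/
noncomputable def convRate {IA IB JA JB : Type} [Fintype IA] [Fintype IB]
    [Fintype JA] [Fintype JB]
    (ρ : BMat IA IB) (σ : BMat JA JB) : ℝ :=
  sSup { r : ℝ | 0 ≤ r ∧ ∀ᶠ n : ℕ in Filter.atTop,
    ∃ Λ : BMat (Fin n → IA) (Fin n → IB) →ₗ[ℂ]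
          BMat (Fin ⌊r * n⌋₊ → JA) (Fin ⌊r * n⌋₊ → JB),
      IsPPTq Λ ∧ Λ (tensorPow ρ n) = tensorPow σ ⌊r * n⌋₊ }

/-! For Hermitian `A`, `‖A‖₁ = ∑ᵢ |λᵢ|` is the maximum of `Re tr (S A)` over unitaries `S`;
hence `c ‖Y‖₁ ≤ m ‖X‖₁` whenever `c Y = ∑ₖ Uₖ X Wₖ` with `m` pairs of unitaries `Uₖ, Wₖ`.
Index the `B` system by a finite abelian group `G` and let `W_{x,ψ} = (δ_{j, a + x} ψ j)_{a j}`
run over the `|G|²` Weyl matrices. Orthogonality of characters gives the completeness relation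
`∑_{x,ψ} W a j * conj (W l b) = |G| δ_{al} δ_{jb}`, which says exactly that
`|G| X^{T_B} = ∑_{x,ψ} (1 ⊗ W) X (1 ⊗ W̄)`. So `|G| ‖X^{T_B}‖₁ ≤ |G|² ‖X‖₁`. -/

namespace Matrix

open scoped Kronecker

section Trace

variable {n : Type*} [Fintype n] [DecidableEq n]

lemma trace_conjStarAlgAut {R : Type*} [CommRing R] [StarRing R] (U : unitary (Matrix n n R))
    (M : Matrix n n R) : (Unitary.conjStarAlgAut R _ U M).trace = M.trace := by
  rw [Unitary.conjStarAlgAut_apply, trace_mul_cycle, Unitary.coe_star_mul_self, one_mul]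

lemma IsHermitian.trace_cfc {𝕜 : Type*} [RCLike 𝕜] {A : Matrix n n 𝕜} (hA : A.IsHermitian)
    (f : ℝ → ℝ) : (cfc f A).trace = ∑ i, (f (hA.eigenvalues i) : 𝕜) := by
  rw [hA.cfc_eq, IsHermitian.cfc, trace_conjStarAlgAut, trace_diagonal]
  rfl

end Trace

section TraceNorm

variable {n : Type} [Fintype n] [DecidableEq n]

lemma _root_.traceNorm_eq_re_trace_cfc_sqrt (A : Matrix n n ℂ) :
    traceNorm A = (cfc Real.sqrt (Aᴴ * A)).trace.re := by
  rw [(isHermitian_conjTranspose_mul_self A).cfc_eq]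
  rfl

namespace IsHermitian

variable {A : Matrix n n ℂ}

lemma cfc_sqrt_conjTranspose_mul_self (hA : A.IsHermitian) :
    cfc Real.sqrt (Aᴴ * A) = cfc (fun x : ℝ => |x|) A := by
  have hsq : Aᴴ * A = cfc (fun x : ℝ => x * x) A := by
    rw [cfc_mul (fun x : ℝ => x) (fun x : ℝ => x) A, cfc_id' ℝ A, hA.eq]
  rw [hsq, ← cfc_comp Real.sqrt (fun x : ℝ => x * x) A]
  exact cfc_congr fun x _ => Real.sqrt_mul_self_eq_abs x

lemma traceNorm_eq_sum_abs_eigenvalues (hA : A.IsHermitian) :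
    traceNorm A = ∑ i, |hA.eigenvalues i| := by
  rw [traceNorm_eq_re_trace_cfc_sqrt, hA.cfc_sqrt_conjTranspose_mul_self, hA.trace_cfc,
    Complex.re_sum]
  rfl

lemma re_trace_mul_le_traceNorm (hA : A.IsHermitian) {U : Matrix n n ℂ}
    (hU : U ∈ unitaryGroup n ℂ) : (U * A).trace.re ≤ traceNorm A := by
  set V := hA.eigenvectorUnitary
  set D : Matrix n n ℂ := diagonal (RCLike.ofReal ∘ hA.eigenvalues)
  set Q : Matrix n n ℂ := star (V : Matrix n n ℂ) * U * V
  have hQ : Q ∈ unitaryGroup n ℂ := mul_mem (mul_mem (Unitary.star_mem V.2) hU) V.2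
  have htrace : (U * A).trace = ∑ i, Q i i * (hA.eigenvalues i : ℂ) := by
    calc (U * A).trace = (U * Unitary.conjStarAlgAut ℂ _ V D).trace := by
          rw [← hA.spectral_theorem]
      _ = (Q * D).trace := by
          rw [Unitary.conjStarAlgAut_apply, ← mul_assoc, trace_mul_cycle]
          simp only [Q, mul_assoc]
      _ = ∑ i, Q i i * (hA.eigenvalues i : ℂ) := by simp [D, trace, mul_diagonal]
  rw [htrace, Complex.re_sum, hA.traceNorm_eq_sum_abs_eigenvalues]
  refine Finset.sum_le_sum fun i _ => ?_
  calc (Q i i * (hA.eigenvalues i : ℂ)).re = (Q i i).re * hA.eigenvalues i :=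
        Complex.re_mul_ofReal _ _
    _ ≤ |(Q i i).re| * |hA.eigenvalues i| := by rw [← abs_mul]; exact le_abs_self _
    _ ≤ 1 * |hA.eigenvalues i| := by
        gcongr
        exact (Complex.abs_re_le_norm _).trans (entry_norm_bound_of_unitary hQ i i)
    _ = |hA.eigenvalues i| := one_mul _

lemma exists_unitary_re_trace_mul_eq_traceNorm (hA : A.IsHermitian) :
    ∃ S ∈ unitaryGroup n ℂ, (S * A).trace.re = traceNorm A := by
  set V := hA.eigenvectorUnitary
  set D : Matrix n n ℂ := diagonal (RCLike.ofReal ∘ hA.eigenvalues)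
  let sgn : n → ℂ := fun i => if hA.eigenvalues i < 0 then -1 else 1
  refine ⟨Unitary.conjStarAlgAut ℂ _ V (diagonal sgn), ?_, ?_⟩
  · have hsign : (fun i => star (sgn i) * sgn i) = fun _ => 1 := by
      ext i
      by_cases h : hA.eigenvalues i < 0 <;> simp [sgn, h]
    rw [mem_unitaryGroup_iff', ← map_star, ← map_mul, star_eq_conjTranspose,
      diagonal_conjTranspose, diagonal_mul_diagonal]
    simp only [Pi.star_apply, hsign, diagonal_one, map_one]
  · have hsign : ∀ i, sgn i * (hA.eigenvalues i : ℂ) = (|hA.eigenvalues i| : ℝ) := by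
      intro i
      by_cases h : hA.eigenvalues i < 0
      · simp [sgn, h, abs_of_neg h]
      · simp [sgn, h, abs_of_nonneg (not_lt.mp h)]
    have hSA : Unitary.conjStarAlgAut ℂ _ V (diagonal sgn) * A
        = Unitary.conjStarAlgAut ℂ _ V (diagonal sgn * D) := by
      rw [map_mul, ← hA.spectral_theorem]
    rw [hSA, trace_conjStarAlgAut, diagonal_mul_diagonal, trace_diagonal,
      hA.traceNorm_eq_sum_abs_eigenvalues]
    simp only [Function.comp_apply, RCLike.ofReal_eq_complex_ofReal, hsign]
    rw [← Complex.ofReal_sum, Complex.ofReal_re]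

lemma mul_traceNorm_le_of_smul_eq_sum_unitary {ι : Type*} [Fintype ι] {X Y : Matrix n n ℂ}
    (hX : X.IsHermitian) (hY : Y.IsHermitian) {U W : ι → Matrix n n ℂ}
    (hU : ∀ k, U k ∈ unitaryGroup n ℂ) (hW : ∀ k, W k ∈ unitaryGroup n ℂ) {c : ℝ}
    (h : (c : ℂ) • Y = ∑ k, U k * X * W k) :
    c * traceNorm Y ≤ Fintype.card ι * traceNorm X := by
  obtain ⟨S, hS, hSY⟩ := hY.exists_unitary_re_trace_mul_eq_traceNorm
  calc c * traceNorm Y = (S * ((c : ℂ) • Y)).trace.re := by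
        rw [Matrix.mul_smul, trace_smul, ← hSY, smul_eq_mul, Complex.re_ofReal_mul]
    _ = ∑ k, (W k * S * U k * X).trace.re := by
        simp only [h, Matrix.mul_sum, trace_sum, Complex.re_sum]
        refine Finset.sum_congr rfl fun k _ => ?_
        rw [← mul_assoc, trace_mul_cycle]
        simp only [mul_assoc]
    _ ≤ ∑ _k : ι, traceNorm X :=
        Finset.sum_le_sum fun k _ =>
          hX.re_trace_mul_le_traceNorm (mul_mem (mul_mem (hW k) hS) (hU k))
    _ = Fintype.card ι * traceNorm X := by
        rw [Finset.sum_const, Finset.card_univ, nsmul_eq_mul]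

end IsHermitian

end TraceNorm

section Kronecker

variable {IA IB R : Type*} [Fintype IA] [DecidableEq IA] [Fintype IB] [CommSemiring R]

lemma one_kronecker_mul_apply (M : Matrix IB IB R) (X : Matrix (IA × IB) (IA × IB) R)
    (i : IA) (a : IB) (q : IA × IB) :
    ((1 ⊗ₖ M * X : Matrix (IA × IB) (IA × IB) R)) (i, a) q = ∑ j, M a j * X (i, j) q := by
  simp [mul_apply, Fintype.sum_prod_type, one_apply, ite_mul, Finset.sum_ite_irrel]

lemma mul_one_kronecker_apply (N : Matrix IB IB R) (X : Matrix (IA × IB) (IA × IB) R)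
    (p : IA × IB) (k : IA) (b : IB) :
    ((X * 1 ⊗ₖ N : Matrix (IA × IB) (IA × IB) R)) p (k, b) = ∑ l, X p (k, l) * N l b := by
  simp [mul_apply, Fintype.sum_prod_type, one_apply, mul_ite, Finset.sum_ite_irrel]

end Kronecker

end Matrix

open Matrix
open scoped Kronecker

lemma Matrix.IsHermitian.ptB {IA IB : Type} {X : BMat IA IB} (hX : X.IsHermitian) :
    (ptB X).IsHermitian := by
  ext p q
  exact congrFun (congrFun hX (p.1, q.2)) (q.1, p.2)

lemma smul_ptB_eq_sum_kronecker {IA IB ι : Type} [Fintype IA] [DecidableEq IA] [Fintype IB]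
    [DecidableEq IB] [Fintype ι] {P : ι → Matrix IB IB ℂ} {c : ℂ}
    (hP : ∀ a j l b, ∑ k, P k a j * star (P k l b) = if a = l ∧ j = b then c else 0)
    (X : BMat IA IB) :
    c • ptB X = ∑ k, 1 ⊗ₖ P k * X * 1 ⊗ₖ (P k).map star := by
  ext ⟨i, a⟩ ⟨k, b⟩
  rw [Matrix.smul_apply, Matrix.sum_apply]
  simp only [mul_one_kronecker_apply, one_kronecker_mul_apply, Finset.sum_mul, map_apply]
  have hcomm : ∑ κ, ∑ l, ∑ j, P κ a j * X (i, j) (k, l) * star (P κ l b)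
      = ∑ l, ∑ j, ∑ κ, P κ a j * X (i, j) (k, l) * star (P κ l b) := by
    rw [Finset.sum_comm]
    exact Finset.sum_congr rfl fun l _ => Finset.sum_comm
  have hterm : ∀ l j, ∑ κ, P κ a j * X (i, j) (k, l) * star (P κ l b)
      = X (i, j) (k, l) * if a = l ∧ j = b then c else 0 := by
    intro l j
    rw [← hP, Finset.mul_sum]
    exact Finset.sum_congr rfl fun κ _ => by ring
  rw [hcomm]
  simp only [hterm, mul_ite, mul_zero, ite_and]
  simp [ptB, mul_comm]

section Weyl

variable {G : Type} [AddCommGroup G] [Fintype G] [DecidableEq G]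

def weylMatrix (x : G) (ψ : AddChar G ℂ) : Matrix G G ℂ :=
  Matrix.of fun a j => if j = a + x then ψ j else 0

lemma weylMatrix_mem_unitaryGroup (x : G) (ψ : AddChar G ℂ) :
    weylMatrix x ψ ∈ Matrix.unitaryGroup G ℂ := by
  rw [Matrix.mem_unitaryGroup_iff]
  ext a a'
  by_cases h : a = a'
  · subst h
    simp [weylMatrix, Matrix.mul_apply, ← AddChar.map_neg_eq_conj, ← AddChar.map_add_eq_mul]
  · simp [weylMatrix, Matrix.mul_apply, h]

lemma AddChar.sum_apply_mul_star_apply (j b : G) :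
    ∑ ψ : AddChar G ℂ, ψ j * star (ψ b) = if j = b then (Fintype.card G : ℂ) else 0 := by
  simp_rw [Complex.star_def, ← AddChar.map_neg_eq_conj, ← AddChar.map_add_eq_mul,
    AddChar.sum_apply_eq_ite, ← sub_eq_add_neg, sub_eq_zero]

lemma sum_weylMatrix_mul_star (a j l b : G) :
    ∑ k : G × AddChar G ℂ, weylMatrix k.1 k.2 a j * star (weylMatrix k.1 k.2 l b)
      = if a = l ∧ j = b then (Fintype.card G : ℂ) else 0 := by
  rw [Fintype.sum_prod_type, Fintype.sum_eq_single (j - a)]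
  · simp only [weylMatrix, of_apply, add_sub_cancel, if_true]
    by_cases h : b = l + (j - a)
    · simp only [if_pos h]
      rw [AddChar.sum_apply_mul_star_apply]
      exact if_congr (by grind) rfl rfl
    · have : ¬ (a = l ∧ j = b) := by grind
      simp [h, this]
  · intro x hx
    have : j ≠ a + x := by rintro rfl; simp at hx
    simp [weylMatrix, this]

end Weyl

theorem traceNorm_ptB_le_card_mul {IA G : Type} [Fintype IA] [DecidableEq IA] [AddCommGroup G]
    [Fintype G] [DecidableEq G] {X : BMat IA G} (hX : X.IsHermitian) :
    traceNorm (ptB X) ≤ Fintype.card G * traceNorm X := by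
  have hU (k : G × AddChar G ℂ) :
      (1 : Matrix IA IA ℂ) ⊗ₖ weylMatrix k.1 k.2 ∈ unitaryGroup (IA × G) ℂ :=
    kronecker_mem_unitary (one_mem _) (weylMatrix_mem_unitaryGroup k.1 k.2)
  have hW (k : G × AddChar G ℂ) :
      (1 : Matrix IA IA ℂ) ⊗ₖ (weylMatrix k.1 k.2).map star ∈ unitaryGroup (IA × G) ℂ :=
    kronecker_mem_unitary (one_mem _)
      (map_star_mem_unitaryGroup_iff.mpr (weylMatrix_mem_unitaryGroup k.1 k.2))
  have key := hX.mul_traceNorm_le_of_smul_eq_sum_unitary hX.ptB hU hW (c := Fintype.card G)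
    (by rw [Complex.ofReal_natCast]; exact smul_ptB_eq_sum_kronecker sum_weylMatrix_mul_star X)
  rw [Fintype.card_prod, AddChar.card_eq, Nat.cast_mul, mul_assoc] at key
  exact le_of_mul_le_mul_left key (by positivity)

/-- For any Hermitian bipartite matrix `X`,
`‖X^{T_B}‖₁ ≤ d_B · ‖X‖₁`. -/
theorem traceNorm_ptB_le {dA dB : ℕ}
    (X : BMat (Fin dA) (Fin dB)) (hX : X.IsHermitian) :
    traceNorm (ptB X) ≤ dB * traceNorm X := by
  rcases Nat.eq_zero_or_pos dB with rfl | hdB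
  · simp [traceNorm, Matrix.trace]
  have : NeZero dB := ⟨hdB.ne'⟩
  simpa using traceNorm_ptB_le_card_mul hX
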